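/- For every n ≥ 1 and every map ρ from the variables x_1,…,x_{2n} to the rook monoid R_3, the value ρ(v_{n,6}^{(1)}) is never a 3×3 permutation matrix of determinant −1; that is, ρ(v_{n,6}^{(1)}) belongs to the set R'_3 obtained from R_3 by removing the three transposition matrices. -/

import Mathlib

universe u v

/-- Evaluation of a (nonempty) word, given as a list of variables, in a magma with an
explicit binary operation; the empty word evaluates to `none`. -/
def wEval {ι S : Type*} (mul : S → S → S) (ρ : ι → S) : List ι → Option S
  | [] => none
  | a :: l => some (l.foldl (fun s i => mul s (ρ i)) (ρ a))

/-- The word `u_{n,k,m} = x₁⋯x_{n+k}(xₙ⋯x₁·x_{n+1}⋯x_{n+k})^{2m-1}` (variables 0-indexed). -/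
def uWord (n k m : ℕ) : List ℕ :=
  List.range (n + k) ++
    (List.replicate (2 * m - 1) ((List.range n).reverse ++ List.range' n k)).flatten

/-- The rook monoid `R_t`: zero-one `t × t` matrices with at most one entry equal to `1`
in each row and in each column. -/
def RookSet (t : ℕ) : Set (Matrix (Fin t) (Fin t) ℕ) :=
  {A | (∀ i j, A i j = 0 ∨ A i j = 1) ∧
    (∀ i j k, A i j = 1 → A i k = 1 → j = k) ∧
    (∀ i j k, A i k = 1 → A j k = 1 → i = j)}

/-- The three `3 × 3` transposition matrices. -/
def transpositions : Set (Matrix (Fin 3) (Fin 3) ℕ) :=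
  {Matrix.of ![![0, 1, 0], ![1, 0, 0], ![0, 0, 1]],
   Matrix.of ![![0, 0, 1], ![0, 1, 0], ![1, 0, 0]],
   Matrix.of ![![1, 0, 0], ![0, 0, 1], ![0, 1, 0]]}

/-!
The rook matrices are exactly the natural-number matrices whose row and column sums are at most
`1`, a condition preserved by products, so the value lies in `R₃`. Every variable occurs `12`
times in `v_{n,6}^{(1)}`, so the determinant of the value is a `12`-th power of an integer, hence
nonnegative, whereas every transposition matrix has determinant `-1`.
-/

open Matrix

theorem List.foldl_mul_map {ι M : Type*} [Monoid M] (g : ι → M) (l : List ι) (s : M) :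
    l.foldl (fun s i => s * g i) s = s * (l.map g).prod := by
  induction l generalizing s with
  | nil => simp
  | cons a l ih => simp only [List.foldl_cons, ih, List.map_cons, List.prod_cons, mul_assoc]

theorem eq_prod_of_wEval_mul_eq_some {ι M : Type*} [Monoid M] {ρ : ι → M} {l : List ι} {A : M}
    (h : wEval (· * ·) ρ l = some A) : A = (l.map ρ).prod := by
  cases l with
  | nil => simp [wEval] at h
  | cons a l =>
    rw [wEval, Option.some.injEq, List.foldl_mul_map] at h
    simp [← h]

theorem prod_map_uWord {N : Type*} [CommMonoid N] (g : ℕ → N) (n k : ℕ) {m : ℕ} (hm : m ≠ 0) :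
    ((uWord n k m).map g).prod = ((List.range (n + k)).map g).prod ^ (2 * m) := by
  have hblock : (((List.range n).reverse ++ List.range' n k).map g).prod =
      ((List.range (n + k)).map g).prod := by
    refine (List.Perm.map g ?_).prod_eq
    rw [List.range_eq_range', List.range_eq_range', ← List.range'_append_1, Nat.zero_add]
    exact (List.reverse_perm _).append_right _
  rw [uWord, List.map_append, List.prod_append, List.map_flatten, List.map_replicate,
    List.prod_flatten, List.map_replicate, List.prod_replicate, hblock, ← pow_succ']
  congr 1
  omega

theorem Fintype.sum_nat_le_one_iff {ι : Type*} [Fintype ι] {f : ι → ℕ} :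
    ∑ j, f j ≤ 1 ↔ (∀ j, f j = 0 ∨ f j = 1) ∧ ∀ j k, f j = 1 → f k = 1 → j = k := by
  classical
  constructor
  · intro h
    refine ⟨fun j => ?_, fun j k hj hk => ?_⟩
    · have := (Finset.single_le_sum (fun i _ => Nat.zero_le (f i)) (Finset.mem_univ j)).trans h
      omega
    · by_contra hjk
      have := (Finset.sum_le_sum_of_subset (f := f) (Finset.subset_univ {j, k})).trans h
      rw [Finset.sum_pair hjk, hj, hk] at this
      omega
  · rintro ⟨h01, huniq⟩
    by_cases hone : ∃ j, f j = 1
    · obtain ⟨j, hj⟩ := hone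
      rw [Finset.sum_eq_single j (fun k _ hkj => ?_) (by simp)]
      · exact hj.le
      · exact (h01 k).resolve_right fun hk => hkj (huniq k j hk hj)
    · push Not at hone
      simp [fun j => (h01 j).resolve_right (hone j)]

theorem mem_rookSet_iff {t : ℕ} {A : Matrix (Fin t) (Fin t) ℕ} :
    A ∈ RookSet t ↔ (∀ i, ∑ j, A i j ≤ 1) ∧ ∀ i, ∑ j, Aᵀ i j ≤ 1 := by
  simp only [RookSet, Set.mem_ofPred_eq, Fintype.sum_nat_le_one_iff, transpose_apply, forall_and]
  exact ⟨fun ⟨h01, hrow, hcol⟩ => ⟨⟨h01, hrow⟩, fun i j => h01 j i, fun i j k => hcol j k i⟩,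
    fun ⟨⟨h01, hrow⟩, _, hcol⟩ => ⟨h01, hrow, fun i j k => hcol k i j⟩⟩

theorem rowSum_mul_le_one {t : ℕ} {A B : Matrix (Fin t) (Fin t) ℕ}
    (hA : ∀ i, ∑ j, A i j ≤ 1) (hB : ∀ i, ∑ j, B i j ≤ 1) (i : Fin t) :
    ∑ j, (A * B) i j ≤ 1 :=
  calc ∑ j, (A * B) i j = ∑ k, A i k * ∑ j, B k j := by
        simp only [mul_apply, Finset.mul_sum]
        exact Finset.sum_comm
    _ ≤ ∑ k, A i k * 1 := by gcongr with k; exact hB k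
    _ ≤ 1 := by simpa using hA i

def rookMonoid (t : ℕ) : Submonoid (Matrix (Fin t) (Fin t) ℕ) where
  carrier := RookSet t
  one_mem' := by
    have h : ∀ i, ∑ j, (1 : Matrix (Fin t) (Fin t) ℕ) i j ≤ 1 := by
      simp [one_apply]
    exact mem_rookSet_iff.2 ⟨h, by rwa [transpose_one]⟩
  mul_mem' {A B} hA hB := by
    rw [mem_rookSet_iff] at hA hB ⊢
    exact ⟨rowSum_mul_le_one hA.1 hB.1, by
      simpa only [transpose_mul] using rowSum_mul_le_one hB.2 hA.2⟩

/-- `ℕ` is not a commutative ring, so determinants of rook matrices are taken after casting to `ℤ`. -/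
def intDet (t : ℕ) : Matrix (Fin t) (Fin t) ℕ →* ℤ :=
  detMonoidHom.comp (Nat.castRingHom ℤ).mapMatrix.toMonoidHom

theorem intDet_of_mem_transpositions {T : Matrix (Fin 3) (Fin 3) ℕ} (hT : T ∈ transpositions) :
    intDet 3 T = -1 := by
  rcases hT with rfl | rfl | rfl <;> simp [intDet, det_fin_three]

/-- For every `n ≥ 1` and every assignment of rook matrices to the variables,
the value of `v_{n,6}^{(1)} (= u_{n,n,6})` is never a transposition matrix; that is, it lies in
`R₃' = R₃ \ {transpositions}`. -/
theorem v1_value_avoids_transpositions :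
    ∀ n, 1 ≤ n → ∀ ρ : ℕ → Matrix (Fin 3) (Fin 3) ℕ, (∀ i, ρ i ∈ RookSet 3) →
      ∀ A, wEval (· * ·) ρ (uWord n n 6) = some A → A ∈ RookSet 3 \ transpositions := by
  intro n _ ρ hρ A hA
  obtain rfl := eq_prod_of_wEval_mul_eq_some hA
  refine ⟨list_prod_mem (S := rookMonoid 3) ?_, fun hT => ?_⟩
  · simp only [List.mem_map]
    rintro _ ⟨i, -, rfl⟩
    exact hρ i
  have hsq : 0 ≤ intDet 3 ((uWord n n 6).map ρ).prod := by
    rw [map_list_prod, List.map_map, prod_map_uWord _ _ _ (by norm_num)]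
    exact Even.pow_nonneg ⟨6, rfl⟩ _
  linarith [intDet_of_mem_transpositions hT]
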